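/- The branch-fixed differential squares to zero: d^{n+1} ∘ d^n = 0 for every n ≥ 0, so (C^•, d) is a cochain complex. -/
import Mathlib


/-! Core definitions for (edge-labeled) `m`-bonsais, following Byun,
"A Generalization of Connes-Kreimer Hopf Algebra".

An `m`-bonsai is a finite rooted tree in which every vertex has at most `m`
children and the edges from a vertex to its children carry pairwise distinct
labels from `{1, …, m}` (here modeled by `Fin m`).  We encode such a tree by
its (finite, prefix-closed) set of vertex-addresses: the address of a vertex
is the list of edge labels on the path from the root to it.  This encoding
builds in both the arity bound and the distinctness of sibling labels. -/

open scoped Classical TensorProduct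

structure Bonsai (m : ℕ) where
  verts : Finset (List (Fin m))
  root_mem : ([] : List (Fin m)) ∈ verts
  prefix_closed : ∀ ⦃p q : List (Fin m)⦄, p ∈ verts → q <+: p → q ∈ verts

namespace Bonsai

variable {m : ℕ}

theorem ext' {T U : Bonsai m} (h : T.verts = U.verts) : T = U := by
  cases T; cases U; simp_all

/-- The one-vertex bonsai. -/
def point (m : ℕ) : Bonsai m where
  verts := {[]}
  root_mem := by simp
  prefix_closed := by
    intro p q hp hq
    simp only [Finset.mem_singleton] at hp ⊢
    subst hp
    exact List.prefix_nil.mp hq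

/-- `deg T` is the number of vertices of `T`. -/
def deg (T : Bonsai m) : ℕ := T.verts.card

/-- The subtree of `T` rooted at the vertex (address) `e`. -/
noncomputable def subtreeAt (T : Bonsai m) (e : List (Fin m)) : Bonsai m where
  verts := insert [] ((T.verts.filter (fun p => e <+: p)).image (fun p => p.drop e.length))
  root_mem := by simp
  prefix_closed := by
    intro p q hp hq
    simp only [Finset.mem_insert, Finset.mem_image, Finset.mem_filter] at hp ⊢
    rcases hp with rfl | ⟨r, ⟨hr, her⟩, rfl⟩
    · left; exact List.prefix_nil.mp hq
    · right
      refine ⟨e ++ q, ⟨T.prefix_closed hr ?_, List.prefix_append e q⟩, by simp⟩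
      have : e ++ q <+: e ++ r.drop e.length := (List.prefix_append_right_inj e).mpr hq
      rwa [List.prefix_iff_eq_append.mp her] at this

/-- The set of simple cuts of `T` (including the empty cut).  A simple cut is a
set of edges (an edge is recorded by the address of its child endpoint, hence a
nonempty vertex address) no two of which lie on a common path to the root. -/
noncomputable def cutsSet (T : Bonsai m) : Finset (Finset (List (Fin m))) :=
  (T.verts.erase []).powerset.filter
    (fun c => ∀ e ∈ c, ∀ e' ∈ c, e <+: e' → e = e')

/-- `R_c(T)`: the trunk (the part containing the root) left after the simple cut `c`. -/
noncomputable def trunk (T : Bonsai m) (c : Finset (List (Fin m))) : Bonsai m where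
  verts := insert [] (T.verts.filter (fun p => ∀ e ∈ c, ¬ e <+: p))
  root_mem := by simp
  prefix_closed := by
    intro p q hp hq
    simp only [Finset.mem_insert, Finset.mem_filter] at hp ⊢
    rcases hp with rfl | ⟨hp, hc⟩
    · left; exact List.prefix_nil.mp hq
    · right
      exact ⟨T.prefix_closed hp hq, fun e he hel => hc e he (hel.trans hq)⟩

/-- `P_c(T)`: the forest (multiset) of branches cut off by the simple cut `c`. -/
noncomputable def branches (T : Bonsai m) (c : Finset (List (Fin m))) :
    Multiset (Bonsai m) := c.val.map T.subtreeAt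

end Bonsai

namespace Bonsai

variable {m : ℕ}

/-- Rebuild a bonsai from a raw vertex set (returning the one-vertex bonsai on
junk input; by proof irrelevance this is harmless). -/
noncomputable def mkBonsai (s : Finset (List (Fin m))) : Bonsai m :=
  if h : ([] : List (Fin m)) ∈ s ∧ (∀ ⦃p q : List (Fin m)⦄, p ∈ s → q <+: p → q ∈ s)
  then ⟨s, h.1, h.2⟩ else point m

/-- The number of edges of `T`. -/
def numEdges (T : Bonsai m) : ℕ := T.deg - 1

/-- The number of children of the vertex `v` in the raw vertex set `s`. -/
noncomputable def rawChildren (s : Finset (List (Fin m))) (v : List (Fin m)) : ℕ :=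
  (Finset.univ.filter (fun l : Fin m => v ++ [l] ∈ s)).card

/-- The number of branching vertices (vertices with at least two children) of
the raw vertex set `s`. -/
noncomputable def rawBranchCount (s : Finset (List (Fin m))) : ℕ :=
  (s.filter (fun v => 2 ≤ rawChildren s v)).card

end Bonsai

namespace Bonsai
variable {m : ℕ}

/-- All lists over `Fin m` of length at most `L`. -/
noncomputable def allLists (m : ℕ) : ℕ → Finset (List (Fin m))
  | 0 => {[]}
  | L+1 => insert [] ((Finset.univ ×ˢ allLists m L).image (fun x => x.1 :: x.2))

/-- The maximal length of a vertex address of `T` (i.e. the depth of `T`). -/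
noncomputable def maxLen (T : Bonsai m) : ℕ := T.verts.sup List.length

/-- Contraction of the edge `e` (given by its child endpoint): every vertex
below `e` is re-addressed through the parent of `e`. -/
def collapse (e p : List (Fin m)) : List (Fin m) :=
  if e <+: p then e.dropLast ++ p.drop e.length else p

/-- The branch-fixed extensions of `T`, as pairs `(verts T', e')` of the vertex
set of the extension `T'` together with the distinguished new edge `e'`:
contracting `e'` in `T'` yields `T`, `T'` has no more branching vertices than
`T`, and `e'` is not a child edge of a branching vertex. -/
noncomputable def extPairs (T : Bonsai m) :
    Finset (Finset (List (Fin m)) × List (Fin m)) :=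
  ((allLists m (maxLen T + 1)).powerset ×ˢ (allLists m (maxLen T + 1))).filter
    (fun se =>
      ([] : List (Fin m)) ∈ se.1
      ∧ (∀ ⦃p q : List (Fin m)⦄, p ∈ se.1 → q <+: p → q ∈ se.1)
      ∧ se.2 ∈ se.1 ∧ se.2 ≠ []
      ∧ se.1.card = T.deg + 1
      ∧ se.1.image (collapse se.2) = T.verts
      ∧ rawBranchCount se.1 ≤ rawBranchCount T.verts
      ∧ rawChildren se.1 (se.2.dropLast) ≤ 1)

end Bonsai

section BranchFixed

variable (k : Type) [Field k] (m : ℕ)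

abbrev BonsaiMod (k : Type) [Field k] (m : ℕ) := Bonsai m →₀ k

/-- The branch-fixed differential on a determinanted bonsai
`d(T ⊗ det T) = Σ_{(T',e')} T' ⊗ e' ∧ det T`, the sum over all branch-fixed
extensions of `T`, with `e' ∧ det T` re-expressed in the traversing order of
`T'` using the sign rule (the traversing order of the edges is the
lexicographic order of their addresses). -/
noncomputable def bfVal (T : Bonsai m) : BonsaiMod k m :=
  ∑ se ∈ Bonsai.extPairs T,
    ((-1 : k) ^ (((se.1.erase []).filter (fun q => q < se.2)).card))
      • Finsupp.single (Bonsai.mkBonsai se.1) 1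

/-- The branch-fixed differential, extended linearly. -/
noncomputable def bfMap : BonsaiMod k m →ₗ[k] BonsaiMod k m :=
  Finsupp.lsum k (fun T => LinearMap.toSpanSingleton k (BonsaiMod k m) (bfVal k m T))

end BranchFixed
namespace BF

variable {m : ℕ}

lemma nil_lt_of_ne {q : List (Fin m)} (h : q ≠ []) : [] < q := by
  cases q with
  | nil => exact absurd rfl h
  | cons a t => exact List.nil_lt_cons a t

lemma cons_lt_cons_iff' {a b : Fin m} {x y : List (Fin m)} :
    (a :: x : List (Fin m)) < b :: y ↔ a < b ∨ (a = b ∧ x < y) := by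
  constructor
  · intro h
    cases h with
    | rel h => exact Or.inl h
    | cons h => exact Or.inr ⟨rfl, h⟩
  · rintro (h | ⟨rfl, h⟩)
    · exact List.Lex.rel h
    · exact List.Lex.cons h

lemma append_lt_append_iff (r : List (Fin m)) {p q : List (Fin m)} :
    r ++ p < r ++ q ↔ p < q := by
  induction r with
  | nil => exact Iff.rfl
  | cons a t ih =>
      rw [List.cons_append, List.cons_append, cons_lt_cons_iff']
      simp [ih]

lemma lt_of_prefix_ne {v p : List (Fin m)} (h : v <+: p) (hne : v ≠ p) : v < p := by
  obtain ⟨t, rfl⟩ := h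
  have ht : t ≠ [] := by rintro rfl; simp at hne
  have h2 : (v ++ [] : List (Fin m)) < v ++ t := (append_lt_append_iff v).mpr (nil_lt_of_ne ht)
  simpa using h2

lemma lt_append_iff_of_not_prefix :
    ∀ {v p : List (Fin m)}, ¬ v <+: p → ∀ (s t : List (Fin m)), (p < v ++ s ↔ p < v ++ t) := by
  intro v
  induction v with
  | nil => intro p h; exact absurd List.nil_prefix h
  | cons a v ih =>
      intro p h s t
      cases p with
      | nil =>
          constructor <;> intro _ <;> exact nil_lt_of_ne (by simp)
      | cons b p' =>
          by_cases hab : b = a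
          · subst hab
            have h' : ¬ v <+: p' := fun hh => h (List.cons_prefix_cons.mpr ⟨rfl, hh⟩)
            rw [List.cons_append, List.cons_append, cons_lt_cons_iff', cons_lt_cons_iff']
            simp [ih h' s t]
          · rw [List.cons_append, List.cons_append, cons_lt_cons_iff', cons_lt_cons_iff']
            simp [hab]

lemma append_lt_iff_of_not_prefix {v p : List (Fin m)} (h : ¬ v <+: p) (s t : List (Fin m)) :
    v ++ s < p ↔ v ++ t < p := by
  have key : ∀ s t : List (Fin m), v ++ s < p → v ++ t < p := by
    intro s t hlt
    rcases lt_trichotomy (v ++ t) p with h1 | h1 | h1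
    · exact h1
    · exact absurd (h1 ▸ List.prefix_append v t) h
    · have h2 := (lt_append_iff_of_not_prefix h t s).mp h1
      exact absurd hlt (lt_asymm h2)
  exact ⟨key s t, key t s⟩

/-- Insertion of an edge labelled `l` directly below the vertex `v`:
the action on vertex addresses. -/
def ins (v : List (Fin m)) (l : Fin m) (p : List (Fin m)) : List (Fin m) :=
  if v <+: p ∧ p ≠ v then v ++ l :: p.drop v.length else p

lemma ins_of_append {t : List (Fin m)} (ht : t ≠ []) (v : List (Fin m)) (l : Fin m) :
    ins v l (v ++ t) = v ++ l :: t := by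
  have h1 : v <+: v ++ t := List.prefix_append v t
  have h2 : v ++ t ≠ v := by simpa using ht
  rw [ins, if_pos ⟨h1, h2⟩, List.drop_left]

lemma ins_of_not_prefix {v p : List (Fin m)} (h : ¬ v <+: p) (l : Fin m) : ins v l p = p :=
  if_neg (fun hc => h hc.1)

lemma ins_self (v : List (Fin m)) (l : Fin m) : ins v l v = v :=
  if_neg (fun hc => hc.2 rfl)

lemma ins_nil (v : List (Fin m)) (l : Fin m) : ins v l [] = [] := by
  by_cases h : v = []
  · subst h; exact ins_self [] l
  · exact ins_of_not_prefix (fun hp => h (List.prefix_nil.mp hp)) l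

lemma ins_cases (v : List (Fin m)) (l : Fin m) (p : List (Fin m)) :
    (∃ t : List (Fin m), t ≠ [] ∧ p = v ++ t ∧ ins v l p = v ++ l :: t) ∨
      (¬ (v <+: p ∧ p ≠ v) ∧ ins v l p = p) := by
  by_cases h : v <+: p ∧ p ≠ v
  · obtain ⟨⟨t, rfl⟩, hne⟩ := h
    have ht : t ≠ [] := by rintro rfl; simp at hne
    exact Or.inl ⟨t, ht, rfl, ins_of_append ht v l⟩
  · exact Or.inr ⟨h, if_neg h⟩

lemma ins_length_le (v : List (Fin m)) (l : Fin m) (p : List (Fin m)) :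
    (ins v l p).length ≤ p.length + 1 := by
  rcases ins_cases v l p with ⟨t, ht, rfl, h⟩ | ⟨-, h⟩ <;> rw [h] <;> simp [List.length_append] <;> omega

lemma ins_eq_nil_iff {v : List (Fin m)} {l : Fin m} {p : List (Fin m)} :
    ins v l p = [] ↔ p = [] := by
  constructor
  · intro h
    rcases ins_cases v l p with ⟨t, ht, rfl, h2⟩ | ⟨-, h2⟩
    · rw [h2] at h; exact absurd h (by simp)
    · rwa [h2] at h
  · rintro rfl; exact ins_nil v l

lemma ins_ne_new (v : List (Fin m)) (l : Fin m) (p : List (Fin m)) :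
    ins v l p ≠ v ++ [l] := by
  rcases ins_cases v l p with ⟨t, ht, rfl, h⟩ | ⟨hn, h⟩ <;> rw [h]
  · intro hc
    have := List.append_cancel_left hc
    simp only [List.cons.injEq] at this
    exact ht this.2
  · intro hc
    refine hn ⟨?_, ?_⟩
    · rw [hc]; exact List.prefix_append v [l]
    · rw [hc]; intro hc2
      have := congrArg List.length hc2
      simp [List.length_append] at this

lemma ins_injective (v : List (Fin m)) (l : Fin m) : Function.Injective (ins v l) := by
  intro p q h
  rcases ins_cases v l p with ⟨t, ht, rfl, h1⟩ | ⟨hn1, h1⟩ <;>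
    rcases ins_cases v l q with ⟨s, hs, rfl, h2⟩ | ⟨hn2, h2⟩ <;> rw [h1, h2] at h
  · have := List.append_cancel_left h
    simp only [List.cons.injEq] at this
    rw [this.2]
  · exfalso
    refine hn2 ⟨?_, ?_⟩
    · rw [← h]; exact List.prefix_append v _
    · rw [← h]; intro hc
      have := congrArg List.length hc
      simp [List.length_append] at this
  · exfalso
    refine hn1 ⟨?_, ?_⟩
    · rw [h]; exact List.prefix_append v _
    · rw [h]; intro hc
      have := congrArg List.length hc
      simp [List.length_append] at this
  · exact h

lemma ins_lt_ins {v : List (Fin m)} {l : Fin m} {p q : List (Fin m)} (h : p < q) :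
    ins v l p < ins v l q := by
  rcases ins_cases v l p with ⟨t, ht, hp, h1⟩ | ⟨hn1, h1⟩ <;>
    rcases ins_cases v l q with ⟨s, hs, hq, h2⟩ | ⟨hn2, h2⟩ <;> rw [h1, h2]
  · subst hp; subst hq
    have h3 : t < s := (append_lt_append_iff v).mp h
    exact (append_lt_append_iff v).mpr (List.Lex.cons h3)
  · subst hp
    by_cases hq2 : v <+: q
    · have hqv : q = v := by
        by_contra hne
        exact hn2 ⟨hq2, hne⟩
      rw [hqv] at h
      exact absurd h (lt_asymm (lt_of_prefix_ne (List.prefix_append v t) (by simpa using ht)))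
    · exact (append_lt_iff_of_not_prefix hq2 (l :: t) t).mpr h
  · subst hq
    by_cases hp2 : v <+: p
    · have hpv : p = v := by
        by_contra hne
        exact hn1 ⟨hp2, hne⟩
      rw [hpv]
      exact lt_of_prefix_ne (List.prefix_append v _) (by simp)
    · exact (lt_append_iff_of_not_prefix hp2 s (l :: s)).mp h
  · exact h

lemma ins_lt_ins_iff {v : List (Fin m)} {l : Fin m} {p q : List (Fin m)} :
    ins v l p < ins v l q ↔ p < q := by
  constructor
  · intro h
    rcases lt_trichotomy p q with h1 | h1 | h1
    · exact h1
    · subst h1; exact absurd h (lt_irrefl _)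
    · exact absurd h (lt_asymm (ins_lt_ins h1))
  · exact ins_lt_ins

end BF
namespace BF
open Bonsai

variable {m : ℕ} {s : Finset (List (Fin m))} {v w q p : List (Fin m)} {l j : Fin m}

lemma prefix_antisymm {v q : List (Fin m)} (h1 : v <+: q) (h2 : q <+: v) : v = q :=
  h1.eq_of_length (le_antisymm h1.length_le h2.length_le)


lemma prefix_append_cases {q a b : List (Fin m)} (h : q <+: a ++ b) :
    q <+: a ∨ ∃ r, r <+: b ∧ q = a ++ r := by
  by_cases hlen : q.length ≤ a.length
  · exact Or.inl (List.prefix_of_prefix_length_le h (List.prefix_append a b) hlen)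
  · right
    have ha : a <+: q :=
      List.prefix_of_prefix_length_le (List.prefix_append a b) h (le_of_not_ge hlen)
    obtain ⟨r, rfl⟩ := ha
    refine ⟨r, ?_, rfl⟩
    obtain ⟨t, ht⟩ := h
    have : a ++ (r ++ t) = a ++ b := by simpa using ht
    exact ⟨t, List.append_cancel_left this⟩

/-- Vertex set of the insertion of an edge labelled `l` below vertex `v`. -/
noncomputable def insF (s : Finset (List (Fin m))) (v : List (Fin m)) (l : Fin m) :
    Finset (List (Fin m)) :=
  insert (v ++ [l]) (s.image (ins v l))

lemma new_mem_insF : v ++ [l] ∈ insF s v l := Finset.mem_insert_self _ _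

lemma ins_mem_insF (hq : q ∈ s) : ins v l q ∈ insF s v l :=
  Finset.mem_insert_of_mem (Finset.mem_image_of_mem _ hq)

lemma mem_insF {p : List (Fin m)} :
    p ∈ insF s v l ↔ p = v ++ [l] ∨ ∃ q ∈ s, ins v l q = p := by
  simp [insF]

lemma card_insF : (insF s v l).card = s.card + 1 := by
  rw [insF, Finset.card_insert_of_notMem, Finset.card_image_of_injective s (ins_injective v l)]
  intro hmem
  obtain ⟨q, -, hq⟩ := Finset.mem_image.mp hmem
  exact ins_ne_new v l q hq

lemma nil_mem_insF (h : [] ∈ s) : [] ∈ insF s v l := by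
  have h2 := ins_mem_insF (v := v) (l := l) h
  rwa [ins_nil] at h2

lemma mem_insF_prefix_cases (hw : w ∈ insF s v l) (hvw : v <+: w) :
    w = v ∨ v ++ [l] <+: w := by
  rcases mem_insF.mp hw with rfl | ⟨r, hr, rfl⟩
  · exact Or.inr (List.prefix_refl _)
  · rcases ins_cases v l r with ⟨t, ht, rfl, h⟩ | ⟨hn, h⟩
    · right; rw [h]; exact ⟨t, by simp⟩
    · rw [h] at hvw ⊢
      left; by_contra hne
      exact hn ⟨hvw, hne⟩

lemma insF_trichotomy (hw : w ∈ insF s v l) :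
    v ++ [l] <+: w ∨ w <+: v ∨ (¬ v <+: w ∧ ¬ w <+: v) := by
  by_cases hvw : v <+: w
  · rcases mem_insF_prefix_cases hw hvw with rfl | h
    · exact Or.inr (Or.inl (List.prefix_refl _))
    · exact Or.inl h
  · by_cases hwv : w <+: v
    · exact Or.inr (Or.inl hwv)
    · exact Or.inr (Or.inr ⟨hvw, hwv⟩)

lemma insF_prefix_closed (hv : v ∈ s)
    (hs : ∀ ⦃p q : List (Fin m)⦄, p ∈ s → q <+: p → q ∈ s)
    {p q : List (Fin m)} (hp : p ∈ insF s v l) (hq : q <+: p) : q ∈ insF s v l := by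
  have hins_id : ∀ r ∈ s, ¬ (v <+: r ∧ r ≠ v) → r ∈ insF s v l := by
    intro r hr hnr
    have : ins v l r = r := if_neg hnr
    rw [← this]; exact ins_mem_insF hr
  rcases mem_insF.mp hp with rfl | ⟨r, hr, rfl⟩
  · rcases List.prefix_concat_iff.mp hq with rfl | hq2
    · exact new_mem_insF
    · have hqs : q ∈ s := hs hv hq2
      refine hins_id q hqs ?_
      rintro ⟨h1, h2⟩
      exact h2 (prefix_antisymm h1 hq2).symm
  · rcases ins_cases v l r with ⟨t, ht, rfl, h⟩ | ⟨hn, h⟩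
    · rw [h] at hq
      have hq' : q <+: (v ++ [l]) ++ t := by simpa using hq
      rcases prefix_append_cases hq' with h1 | ⟨r', hr', rfl⟩
      · rcases List.prefix_concat_iff.mp h1 with rfl | h2
        · exact new_mem_insF
        · have hqs : q ∈ s := hs hv h2
          refine hins_id q hqs ?_
          rintro ⟨ha, hb⟩
          exact hb (prefix_antisymm ha h2).symm
      · rcases eq_or_ne r' [] with rfl | hr'ne
        · simpa using new_mem_insF
        · have hmem : v ++ r' ∈ s := hs hr ((List.prefix_append_right_inj v).mpr hr')
          have : ins v l (v ++ r') = (v ++ [l]) ++ r' := by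
            rw [ins_of_append hr'ne]; simp
          rw [← this]; exact ins_mem_insF hmem
    · rw [h] at hq
      have hqs : q ∈ s := hs hr hq
      refine hins_id q hqs ?_
      rintro ⟨h1, h2⟩
      refine hn ⟨h1.trans hq, ?_⟩
      intro hrv
      rw [hrv] at hq
      exact h2 (prefix_antisymm h1 hq).symm

lemma concat_inj {a b : List (Fin m)} {x y : Fin m} (h : a ++ [x] = b ++ [y]) :
    a = b ∧ x = y := by
  have h1 : a = b := by
    have := congrArg List.dropLast h
    simpa using this
  subst h1
  have h2 := List.append_cancel_left h
  simp only [List.cons.injEq] at h2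
  exact ⟨rfl, h2.1⟩

lemma child_insF_iff {c : Fin m} : v ++ [c] ∈ insF s v l ↔ c = l := by
  constructor
  · intro h
    rcases mem_insF.mp h with h1 | ⟨r, hr, h2⟩
    · exact (concat_inj h1).2
    · exfalso
      rcases ins_cases v l r with ⟨t, ht, rfl, hh⟩ | ⟨hn, hh⟩
      · rw [hh] at h2
        have := List.append_cancel_left h2
        simp only [List.cons.injEq] at this
        exact ht this.2
      · rw [hh] at h2
        subst h2
        exact hn ⟨List.prefix_append v [c], by simp⟩
  · rintro rfl; exact new_mem_insF

lemma rawChildren_insF_base : rawChildren (insF s v l) v = 1 := by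
  have : (Finset.univ.filter (fun c : Fin m => v ++ [c] ∈ insF s v l)) = {l} := by
    ext c
    simp [child_insF_iff]
  rw [rawChildren, this, Finset.card_singleton]

lemma rawChildren_insF_new : rawChildren (insF s v l) (v ++ [l]) = rawChildren s v := by
  rw [rawChildren, rawChildren]
  congr 1
  ext c
  simp only [Finset.mem_filter, Finset.mem_univ, true_and]
  constructor
  · intro h
    rcases mem_insF.mp h with h1 | ⟨r, hr, h2⟩
    · exfalso
      have := congrArg List.length h1
      simp [List.length_append] at this
    · rcases ins_cases v l r with ⟨t, ht, rfl, hh⟩ | ⟨hn, hh⟩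
      · rw [hh] at h2
        have h3 : v ++ l :: t = v ++ (l :: [c]) := by simpa using h2
        have := List.append_cancel_left h3
        simp only [List.cons.injEq] at this
        rw [this.2] at hr
        simpa using hr
      · exfalso
        rw [hh] at h2
        subst h2
        exact hn ⟨(List.prefix_append v [l]).trans (by simp), by simp⟩
  · intro h
    have : ins v l (v ++ [c]) = (v ++ [l]) ++ [c] := by
      rw [ins_of_append (by simp)]; simp
    rw [← this]
    exact ins_mem_insF h

lemma rawChildren_insF_moved {t : List (Fin m)} (ht : t ≠ []) :
    rawChildren (insF s v l) (v ++ l :: t) = rawChildren s (v ++ t) := by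
  rw [rawChildren, rawChildren]
  congr 1
  ext c
  simp only [Finset.mem_filter, Finset.mem_univ, true_and]
  constructor
  · intro h
    rcases mem_insF.mp h with h1 | ⟨r, hr, h2⟩
    · exfalso
      have := congrArg List.length h1
      simp only [List.length_append, List.length_cons, List.length_nil] at this
      omega
    · rcases ins_cases v l r with ⟨t', ht', rfl, hh⟩ | ⟨hn, hh⟩
      · rw [hh] at h2
        have h3 : v ++ l :: t' = v ++ (l :: (t ++ [c])) := by simpa using h2
        have := List.append_cancel_left h3
        simp only [List.cons.injEq] at this
        rw [this.2] at hr
        simpa using hr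
      · exfalso
        rw [hh] at h2
        subst h2
        refine hn ⟨?_, by simp⟩
        refine (List.prefix_append v (l :: t)).trans ?_
        exact ⟨[c], by simp⟩
  · intro h
    have : ins v l (v ++ (t ++ [c])) = (v ++ l :: t) ++ [c] := by
      rw [ins_of_append (by simp)]; simp
    rw [← this]
    exact ins_mem_insF (by simpa using h)

lemma rawChildren_insF_other (h : ¬ v <+: q) :
    rawChildren (insF s v l) q = rawChildren s q := by
  rw [rawChildren, rawChildren]
  congr 1
  ext c
  simp only [Finset.mem_filter, Finset.mem_univ, true_and]
  constructor
  · intro hmem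
    rcases mem_insF.mp hmem with h1 | ⟨r, hr, h2⟩
    · exfalso
      have hqv : q = v := (concat_inj h1).1
      rw [hqv] at h
      exact h List.prefix_rfl
    · rcases ins_cases v l r with ⟨t', ht', rfl, hh⟩ | ⟨hn, hh⟩
      · exfalso
        rw [hh] at h2
        have hpre : v <+: q ++ [c] := h2 ▸ List.prefix_append v _
        rcases List.prefix_concat_iff.mp hpre with h3 | h3
        · rw [← h3] at h2
          have := congrArg List.length h2
          simp [List.length_append] at this
        · exact h h3
      · rw [hh] at h2; rwa [← h2]
  · intro hmem
    have hid : ins v l (q ++ [c]) = q ++ [c] := by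
      rw [ins, if_neg]
      rintro ⟨hpre, hne⟩
      rcases List.prefix_concat_iff.mp hpre with h3 | h3
      · exact hne h3.symm
      · exact h h3
    rw [← hid]
    exact ins_mem_insF hmem

end BF
namespace BF
open Bonsai

variable {m : ℕ} {s : Finset (List (Fin m))} {v w q p : List (Fin m)} {l j : Fin m}

lemma collapse_ins (v : List (Fin m)) (l : Fin m) (p : List (Fin m)) :
    collapse (v ++ [l]) (ins v l p) = p := by
  rcases ins_cases v l p with ⟨t, ht, rfl, h⟩ | ⟨hn, h⟩ <;> rw [h]
  · have hpre : (v ++ [l]) <+: v ++ l :: t := ⟨t, by simp⟩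
    rw [collapse, if_pos hpre]
    have h1 : v ++ l :: t = (v ++ [l]) ++ t := by simp
    rw [h1, List.drop_left, List.dropLast_concat]
  · rw [collapse, if_neg]
    intro hpre
    refine hn ⟨(List.prefix_append v [l]).trans hpre, ?_⟩
    intro hpv
    rw [hpv] at hpre
    have := hpre.length_le
    simp [List.length_append] at this

lemma collapse_new (v : List (Fin m)) (l : Fin m) :
    collapse (v ++ [l]) (v ++ [l]) = v := by
  rw [collapse, if_pos List.prefix_rfl, List.dropLast_concat]
  simp

lemma collapse_insF_image (hv : v ∈ s) :
    (insF s v l).image (collapse (v ++ [l])) = s := by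
  ext p
  simp only [Finset.mem_image]
  constructor
  · rintro ⟨q, hq, rfl⟩
    rcases mem_insF.mp hq with rfl | ⟨r, hr, rfl⟩
    · rwa [collapse_new]
    · rwa [collapse_ins]
  · intro hp
    exact ⟨ins v l p, ins_mem_insF hp, collapse_ins v l p⟩

lemma rawBranchCount_insF (hv : v ∈ s) :
    rawBranchCount (insF s v l) ≤ rawBranchCount s := by
  rw [rawBranchCount, rawBranchCount]
  apply Finset.card_le_card_of_injOn (collapse (v ++ [l]))
  · intro q hq
    obtain ⟨hqmem, hqb⟩ := Finset.mem_filter.mp hq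
    rcases mem_insF.mp hqmem with rfl | ⟨r, hr, rfl⟩
    · rw [collapse_new]
      refine Finset.mem_filter.mpr ⟨hv, ?_⟩
      rwa [rawChildren_insF_new] at hqb
    · rw [collapse_ins]
      refine Finset.mem_filter.mpr ⟨hr, ?_⟩
      rcases ins_cases v l r with ⟨t, ht, rfl, h⟩ | ⟨hn, h⟩
      · rwa [h, rawChildren_insF_moved ht] at hqb
      · rw [h] at hqb
        by_cases hrv : r = v
        · subst hrv
          rw [rawChildren_insF_base] at hqb
          omega
        · rwa [rawChildren_insF_other (fun hc => hn ⟨hc, hrv⟩)] at hqb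
  · intro q hq q' hq' heq
    obtain ⟨hqmem, hqb⟩ := Finset.mem_filter.mp (Finset.mem_coe.mp hq)
    obtain ⟨hq'mem, hq'b⟩ := Finset.mem_filter.mp (Finset.mem_coe.mp hq')
    have hbase : ∀ r, r ∈ insF s v l → 2 ≤ rawChildren (insF s v l) r → r ≠ v := by
      intro r hrmem hrb hrv
      subst hrv
      rw [rawChildren_insF_base] at hrb
      omega
    rcases mem_insF.mp hqmem with rfl | ⟨r, hr, rfl⟩ <;>
      rcases mem_insF.mp hq'mem with h' | ⟨r', hr', rfl⟩
    · rw [h']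
    · exfalso
      rw [collapse_new, collapse_ins] at heq
      subst heq
      exact hbase _ hq'mem hq'b (by rw [ins_self])
    · exfalso
      subst h'
      rw [collapse_ins, collapse_new] at heq
      exact hbase _ hqmem hqb (by rw [heq, ins_self])
    · rw [collapse_ins, collapse_ins] at heq
      rw [heq]

lemma erase_nil_insF (s : Finset (List (Fin m))) (v : List (Fin m)) (l : Fin m) :
    (insF s v l).erase [] = insert (v ++ [l]) ((s.erase []).image (ins v l)) := by
  rw [insF, Finset.erase_insert_of_ne (by simp)]
  congr 1
  ext p
  simp only [Finset.mem_erase, Finset.mem_image]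
  constructor
  · rintro ⟨hne, q, hq, rfl⟩
    exact ⟨q, ⟨fun h => hne (by rw [h, ins_nil]), hq⟩, rfl⟩
  · rintro ⟨q, ⟨hqne, hq⟩, rfl⟩
    exact ⟨fun h => hqne (ins_eq_nil_iff.mp h), q, hq, rfl⟩

/-- The number of edges of `s` lexicographically smaller than `X`. -/
noncomputable def cnt (s : Finset (List (Fin m))) (X : List (Fin m)) : ℕ :=
  ((s.erase []).filter (fun q => q < X)).card

lemma cnt_insF (s : Finset (List (Fin m))) (v : List (Fin m)) (l : Fin m) (X : List (Fin m)) :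
    cnt (insF s v l) (ins v l X) = cnt s X + (if v ++ [l] < ins v l X then 1 else 0) := by
  rw [cnt, cnt, erase_nil_insF, Finset.filter_insert]
  have himg : ((s.erase []).image (ins v l)).filter (fun q => q < ins v l X)
      = ((s.erase []).filter (fun q => q < X)).image (ins v l) := by
    rw [Finset.filter_image]
    congr 1
    apply Finset.filter_congr
    intro q _
    exact ins_lt_ins_iff
  have hnotmem : v ++ [l] ∉ ((s.erase []).filter (fun q => q < X)).image (ins v l) := by
    intro hc
    obtain ⟨r, -, hr⟩ := Finset.mem_image.mp hc
    exact ins_ne_new v l r hr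
  by_cases h : v ++ [l] < ins v l X
  · rw [if_pos h, himg, Finset.card_insert_of_notMem hnotmem,
      Finset.card_image_of_injective _ (ins_injective v l), if_pos h]
  · rw [if_neg h, himg, Finset.card_image_of_injective _ (ins_injective v l), if_neg h, add_zero]

end BF
namespace BF
open Bonsai

variable {m : ℕ} {s : Finset (List (Fin m))} {v w q p : List (Fin m)} {l j : Fin m}

lemma collapse_self (e : List (Fin m)) : collapse e e = e.dropLast := by
  rw [collapse, if_pos List.prefix_rfl]
  simp [List.drop_length]

lemma mem_allLists {L : ℕ} {p : List (Fin m)} : p ∈ allLists m L ↔ p.length ≤ L := by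
  induction L generalizing p with
  | zero => simp [allLists, List.length_eq_zero_iff]
  | succ L ih =>
      cases p with
      | nil => simp [allLists]
      | cons a t =>
          simp only [allLists, Finset.mem_insert, Finset.mem_image, Finset.mem_product]
          constructor
          · rintro (h | ⟨⟨b, q⟩, ⟨-, hq⟩, heq⟩)
            · exact absurd h (by simp)
            · simp only [List.cons.injEq] at heq
              rw [List.length_cons, ← heq.2]
              exact Nat.succ_le_succ (ih.mp hq)
          · intro h
            right
            exact ⟨(a, t), ⟨Finset.mem_univ a, ih.mpr (Nat.le_of_succ_le_succ h)⟩, rfl⟩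

lemma insF_subset_allLists (T : Bonsai m) (hv : v ∈ T.verts) (l : Fin m) :
    insF T.verts v l ⊆ allLists m (maxLen T + 1) := by
  intro q hq
  have hvlen : v.length ≤ maxLen T := Finset.le_sup (f := List.length) hv
  rcases mem_insF.mp hq with rfl | ⟨r, hr, rfl⟩
  · rw [mem_allLists]
    simp only [List.length_append, List.length_cons, List.length_nil]
    omega
  · rw [mem_allLists]
    have h1 := ins_length_le v l r
    have h2 : r.length ≤ maxLen T := Finset.le_sup (f := List.length) hr
    omega

lemma mkBonsai_insF_verts (T : Bonsai m) (hv : v ∈ T.verts) (l : Fin m) :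
    (mkBonsai (insF T.verts v l)).verts = insF T.verts v l := by
  unfold mkBonsai
  rw [dif_pos ⟨nil_mem_insF T.root_mem,
    fun p q hp hq => insF_prefix_closed hv T.prefix_closed hp hq⟩]

lemma mem_extPairs_iff {T : Bonsai m} {se : Finset (List (Fin m)) × List (Fin m)} :
    se ∈ extPairs T ↔ ∃ v ∈ T.verts, ∃ l : Fin m, se = (insF T.verts v l, v ++ [l]) := by
  obtain ⟨S, e⟩ := se
  rw [extPairs, Finset.mem_filter]
  constructor
  · rintro ⟨-, h1, h2, h3, h4, h5, h6, h7, h8⟩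
    simp only at h1 h2 h3 h4 h5 h6 h7 h8
    set v : List (Fin m) := e.dropLast with hvdef
    set l : Fin m := e.getLast h4 with hldef
    have hl : v ++ [l] = e := List.dropLast_append_getLast h4
    have hve : v <+: e := ⟨[l], hl⟩
    have hvS : v ∈ S := h2 h3 hve
    have hvT : v ∈ T.verts := by
      rw [← h6]
      refine Finset.mem_image.mpr ⟨e, h3, ?_⟩
      rw [collapse_self]
    have hchild : ∀ c : Fin m, v ++ [c] ∈ S → c = l := by
      intro c hc
      have hcard : (Finset.univ.filter (fun c : Fin m => v ++ [c] ∈ S)).card ≤ 1 := h8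
      exact Finset.card_le_one.mp hcard c
        (Finset.mem_filter.mpr ⟨Finset.mem_univ _, hc⟩) l
        (Finset.mem_filter.mpr ⟨Finset.mem_univ _, by rwa [hl]⟩)
    have hdesc : ∀ p ∈ S, v <+: p → p ≠ v → e <+: p := by
      intro p hp hvp hne
      obtain ⟨t, rfl⟩ := hvp
      cases t with
      | nil => exact absurd (by simp) hne
      | cons c t' =>
          have hc : v ++ [c] ∈ S := h2 hp ⟨t', by simp⟩
          rw [hchild c hc] at hp ⊢
          rw [← hl]
          exact ⟨t', by simp⟩
    have key : ∀ p ∈ S, p ≠ e → ins v l (collapse e p) = p := by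
      intro p hp hne
      by_cases hep : e <+: p
      · obtain ⟨t, rfl⟩ := hep
        have ht : t ≠ [] := by
          rintro rfl
          exact hne (by simp)
        have hcol : collapse e (e ++ t) = v ++ t := by
          rw [collapse, if_pos (List.prefix_append e t), List.drop_left]
        rw [hcol, ins_of_append ht]
        rw [← hl]
        simp
      · have hcol : collapse e p = p := by rw [collapse, if_neg hep]
        rw [hcol, ins, if_neg]
        rintro ⟨hvp, hpv⟩
        exact hep (hdesc p hp hvp hpv)
    have Ssub : S ⊆ insF T.verts v l := by
      intro p hp
      by_cases hpe : p = e
      · subst hpe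
        rw [← hl]
        exact new_mem_insF
      · rw [← key p hp hpe]
        refine ins_mem_insF ?_
        rw [← h6]
        exact Finset.mem_image_of_mem _ hp
    have hcards : (insF T.verts v l).card ≤ S.card := by
      rw [card_insF, h5]
      exact le_of_eq rfl
    have hSeq : S = insF T.verts v l := Finset.eq_of_subset_of_card_le Ssub hcards
    exact ⟨v, hvT, l, by rw [Prod.mk.injEq]; exact ⟨hSeq, hl.symm⟩⟩
  · rintro ⟨v, hv, l, heq⟩
    rw [Prod.mk.injEq] at heq
    obtain ⟨rfl, rfl⟩ := heq
    refine ⟨?_, ?_, ?_, ?_, ?_, ?_, ?_, ?_, ?_⟩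
    · rw [Finset.mem_product]
      constructor
      · exact Finset.mem_powerset.mpr (insF_subset_allLists T hv l)
      · rw [mem_allLists]
        simp only [List.length_append, List.length_cons, List.length_nil]
        have : v.length ≤ maxLen T := Finset.le_sup (f := List.length) hv
        omega
    · exact nil_mem_insF T.root_mem
    · exact fun p q hp hq => insF_prefix_closed hv T.prefix_closed hp hq
    · exact new_mem_insF
    · simp
    · rw [card_insF]; rfl
    · exact collapse_insF_image hv
    · exact rawBranchCount_insF hv
    · simp only [List.dropLast_concat]
      rw [rawChildren_insF_base]

lemma extPairs_eq (T : Bonsai m) :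
    extPairs T = (T.verts ×ˢ (Finset.univ : Finset (Fin m))).image
      (fun vl => (insF T.verts vl.1 vl.2, vl.1 ++ [vl.2])) := by
  ext se
  rw [mem_extPairs_iff, Finset.mem_image]
  constructor
  · rintro ⟨v, hv, l, rfl⟩
    exact ⟨(v, l), Finset.mem_product.mpr ⟨hv, Finset.mem_univ _⟩, rfl⟩
  · rintro ⟨⟨v, l⟩, hvl, rfl⟩
    exact ⟨v, (Finset.mem_product.mp hvl).1, l, rfl⟩

end BF
namespace BF
open Bonsai

variable {m : ℕ} {s : Finset (List (Fin m))} {v w p : List (Fin m)} {l j : Fin m}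

/-- The first insertion address for the swapped pair. -/
def uu (v : List (Fin m)) (l : Fin m) (w : List (Fin m)) : List (Fin m) :=
  if v ++ [l] <+: w then v ++ w.drop (v.length + 1) else w

/-- The second insertion address for the swapped pair. -/
def ww (v w : List (Fin m)) (j : Fin m) : List (Fin m) :=
  if w <+: v then w ++ j :: v.drop w.length else v

lemma len_not_prefix {a b : List (Fin m)} (h : b.length < a.length) : ¬ a <+: b :=
  fun hc => absurd hc.length_le (by omega)

lemma ins_unmoved {v p : List (Fin m)} (h : ¬ (v <+: p ∧ p ≠ v)) (l : Fin m) :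
    ins v l p = p := if_neg h

lemma uuII (w d : List (Fin m)) (l : Fin m) : uu (w ++ d) l w = w := by
  rw [uu, if_neg]
  apply len_not_prefix
  simp only [List.length_append, List.length_cons, List.length_nil]
  omega

lemma wwII (w d : List (Fin m)) (j : Fin m) : ww (w ++ d) w j = w ++ j :: d := by
  rw [ww, if_pos (List.prefix_append w d), List.drop_left]

lemma uuIII (v d : List (Fin m)) (l : Fin m) : uu v l (v ++ l :: d) = v ++ d := by
  have hpre : v ++ [l] <+: v ++ l :: d := ⟨d, by simp⟩
  rw [uu, if_pos hpre]
  congr 1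
  have h1 : v ++ l :: d = (v ++ [l]) ++ d := by simp
  rw [h1, List.drop_left' (by simp [List.length_append])]

lemma wwIII (v d : List (Fin m)) (l j : Fin m) : ww v (v ++ l :: d) j = v := by
  rw [ww, if_neg]
  apply len_not_prefix
  simp only [List.length_append, List.length_cons]
  omega

lemma uuI (h : ¬ v <+: w) (l : Fin m) : uu v l w = w := by
  rw [uu, if_neg]
  intro hc
  exact h ((List.prefix_append v [l]).trans hc)

lemma wwI (h : ¬ w <+: v) (j : Fin m) : ww v w j = v := by
  rw [ww, if_neg h]

lemma mem_insF_decomp (hv : v ∈ s) (hw : w ∈ insF s v l) :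
    (∃ d, w = v ++ l :: d ∧ v ++ d ∈ s) ∨ (¬ (v <+: w ∧ w ≠ v) ∧ w ∈ s) := by
  rcases mem_insF.mp hw with rfl | ⟨r, hr, rfl⟩
  · exact Or.inl ⟨[], by simp, by simpa using hv⟩
  · rcases ins_cases v l r with ⟨t, ht, rfl, h⟩ | ⟨hn, h⟩
    · exact Or.inl ⟨t, h, hr⟩
    · right
      rw [h]
      exact ⟨hn, hr⟩

/-! ### Commutation, case III : `w = v ++ l :: d` -/

lemma comm_III (v d : List (Fin m)) (l j : Fin m) (p : List (Fin m)) :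
    ins (v ++ l :: d) j (ins v l p) = ins v l (ins (v ++ d) j p) := by
  by_cases B : (v ++ d) <+: p ∧ p ≠ v ++ d
  · obtain ⟨⟨t, rfl⟩, hne⟩ := B
    have ht : t ≠ [] := by rintro rfl; simp at hne
    have e1 : ins v l ((v ++ d) ++ t) = (v ++ l :: d) ++ t := by
      rw [List.append_assoc, ins_of_append (List.append_ne_nil_of_right_ne_nil d ht)]
      simp
    have e2 : ins (v ++ l :: d) j ((v ++ l :: d) ++ t) = (v ++ l :: d) ++ j :: t :=
      ins_of_append ht _ _
    have e3 : ins (v ++ d) j ((v ++ d) ++ t) = (v ++ d) ++ j :: t := ins_of_append ht _ _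
    have e4 : ins v l ((v ++ d) ++ j :: t) = (v ++ l :: d) ++ j :: t := by
      rw [List.append_assoc, ins_of_append (by simp)]
      simp
    rw [e1, e2, e3, e4]
  · by_cases A : v <+: p ∧ p ≠ v
    · obtain ⟨⟨t, rfl⟩, hne⟩ := A
      have ht : t ≠ [] := by rintro rfl; simp at hne
      by_cases hpd : v ++ t = v ++ d
      · have htd : t = d := List.append_cancel_left hpd
        rw [htd] at ht ⊢
        simp only [ins_of_append ht, ins_self]
      · have eB : ins (v ++ d) j (v ++ t) = v ++ t :=
          ins_unmoved (fun hc => B ⟨hc.1, hc.2⟩) j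
        have hnd : ¬ (v ++ d) <+: (v ++ t) := by
          intro hc
          exact B ⟨hc, hpd⟩
        have hnp : ¬ (v ++ l :: d) <+: (v ++ l :: t) := by
          intro hc
          apply hnd
          have h2 := (List.prefix_append_right_inj v).mp hc
          have h3 := (List.cons_prefix_cons.mp h2).2
          exact (List.prefix_append_right_inj v).mpr h3
        rw [eB, ins_of_append ht, ins_of_not_prefix hnp]
    · have eA : ins v l p = p := ins_unmoved A l
      have eB : ins (v ++ d) j p = p := ins_unmoved B j
      rw [eA, eB, eA]
      apply ins_unmoved _ j
      rintro ⟨hpre, hne⟩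
      have hvp : v <+: p := List.IsPrefix.trans ⟨l :: d, rfl⟩ hpre
      have hpv : p = v := by
        by_contra hc
        exact A ⟨hvp, hc⟩
      rw [hpv] at hpre
      have := hpre.length_le
      simp only [List.length_append, List.length_cons] at this
      omega

lemma newA_III (v d : List (Fin m)) (l j : Fin m) :
    ins (v ++ l :: d) j (v ++ [l]) = v ++ [l] := by
  cases d with
  | nil => exact ins_self _ _
  | cons a d' =>
      apply ins_of_not_prefix
      intro hc
      have := hc.length_le
      simp only [List.length_append, List.length_cons, List.length_nil] at this
      omega

/-! ### Commutation, case II : `v = w ++ d` -/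

lemma comm_II (w d : List (Fin m)) (l j : Fin m) (p : List (Fin m)) :
    ins w j (ins (w ++ d) l p) = ins (w ++ j :: d) l (ins w j p) := by
  by_cases A : (w ++ d) <+: p ∧ p ≠ w ++ d
  · obtain ⟨⟨t, rfl⟩, hne⟩ := A
    have ht : t ≠ [] := by rintro rfl; simp at hne
    have e1 : ins (w ++ d) l ((w ++ d) ++ t) = (w ++ d) ++ l :: t := ins_of_append ht _ _
    have e2 : ins w j ((w ++ d) ++ l :: t) = w ++ j :: (d ++ l :: t) := by
      rw [List.append_assoc, ins_of_append (by simp)]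
    have e3 : ins w j ((w ++ d) ++ t) = w ++ j :: (d ++ t) := by
      rw [List.append_assoc, ins_of_append (List.append_ne_nil_of_right_ne_nil d ht)]
    have e4 : ins (w ++ j :: d) l (w ++ j :: (d ++ t)) = (w ++ j :: d) ++ l :: t := by
      have h5 : w ++ j :: (d ++ t) = (w ++ j :: d) ++ t := by simp
      rw [h5, ins_of_append ht]
    rw [e1, e2, e3, e4]
    simp
  · by_cases Bp : w <+: p ∧ p ≠ w
    · obtain ⟨⟨t, rfl⟩, hne⟩ := Bp
      have ht : t ≠ [] := by rintro rfl; simp at hne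
      by_cases hpd : w ++ t = w ++ d
      · have htd : t = d := List.append_cancel_left hpd
        rw [htd] at ht ⊢
        simp only [ins_self, ins_of_append ht]
      · have eA : ins (w ++ d) l (w ++ t) = w ++ t :=
          ins_unmoved (fun hc => A ⟨hc.1, hc.2⟩) l
        have hnd : ¬ (w ++ d) <+: (w ++ t) := fun hc => A ⟨hc, hpd⟩
        have hnp : ¬ (w ++ j :: d) <+: (w ++ j :: t) := by
          intro hc
          apply hnd
          have h2 := (List.prefix_append_right_inj w).mp hc
          have h3 := (List.cons_prefix_cons.mp h2).2
          exact (List.prefix_append_right_inj w).mpr h3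
        have hne2 : w ++ j :: t ≠ w ++ j :: d := by
          intro hc
          apply hpd
          have h2 := List.append_cancel_left hc
          simp only [List.cons.injEq] at h2
          rw [h2.2]
        rw [eA, ins_of_append ht, ins_unmoved (fun hc => hnp hc.1) l]
    · have eA : ins (w ++ d) l p = p := ins_unmoved A l
      have eB : ins w j p = p := ins_unmoved Bp j
      rw [eA, eB]
      symm
      apply ins_unmoved _ l
      rintro ⟨hpre, hne⟩
      have hwp : w <+: p := (List.prefix_append w (j :: d)).trans hpre
      have hpw : p = w := by
        by_contra hc
        exact Bp ⟨hwp, hc⟩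
      rw [hpw] at hpre
      have := hpre.length_le
      simp only [List.length_append, List.length_cons] at this
      omega

lemma newA_II (w d : List (Fin m)) (l j : Fin m) :
    ins w j ((w ++ d) ++ [l]) = (w ++ j :: d) ++ [l] := by
  rw [List.append_assoc, ins_of_append (by simp)]
  simp

/-! ### Commutation, case I : `v` and `w` incomparable -/

lemma comm_I (hnvw : ¬ v <+: w) (hnwv : ¬ w <+: v) (l j : Fin m) (p : List (Fin m)) :
    ins w j (ins v l p) = ins v l (ins w j p) := by
  by_cases A : v <+: p ∧ p ≠ v
  · obtain ⟨⟨t, rfl⟩, hne⟩ := A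
    have ht : t ≠ [] := by rintro rfl; simp at hne
    by_cases B : w <+: v ++ t ∧ v ++ t ≠ w
    · rcases List.prefix_or_prefix_of_prefix (List.prefix_append v t) B.1 with h | h
      · exact absurd h hnvw
      · exact absurd h hnwv
    · have eB : ins w j (v ++ t) = v ++ t := ins_unmoved B j
      have hnp : ¬ w <+: (v ++ l :: t) := by
        intro hc
        rcases List.prefix_or_prefix_of_prefix (List.prefix_append v (l :: t)) hc with h | h
        · exact hnvw h
        · exact hnwv h
      rw [eB, ins_of_append ht, ins_of_not_prefix hnp]
  · by_cases B : w <+: p ∧ p ≠ w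
    · obtain ⟨⟨t, rfl⟩, hne⟩ := B
      have ht : t ≠ [] := by rintro rfl; simp at hne
      have eA : ins v l (w ++ t) = w ++ t := ins_unmoved A l
      have hnp : ¬ v <+: (w ++ j :: t) := by
        intro hc
        rcases List.prefix_or_prefix_of_prefix hc (List.prefix_append w (j :: t)) with h | h
        · exact hnvw h
        · exact hnwv h
      rw [eA, ins_of_append ht, ins_of_not_prefix hnp]
    · have eA : ins v l p = p := ins_unmoved A l
      have eB : ins w j p = p := ins_unmoved B j
      rw [eA, eB, eA]

lemma newA_I (hnvw : ¬ v <+: w) (hnwv : ¬ w <+: v) (l j : Fin m) :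
    ins w j (v ++ [l]) = v ++ [l] := by
  apply ins_of_not_prefix
  intro hc
  rcases List.prefix_concat_iff.mp hc with h | h
  · exact hnvw (h ▸ List.prefix_append v [l])
  · exact hnwv h

/-- The full swap specification. -/
lemma swap_spec (hv : v ∈ s) (hw : w ∈ insF s v l) (j : Fin m) :
    uu v l w ∈ s ∧ ww v w j ∈ insF s (uu v l w) j ∧
    ins w j (v ++ [l]) = ww v w j ++ [l] ∧
    (∀ p, ins w j (ins v l p) = ins (ww v w j) l (ins (uu v l w) j p)) ∧
    uu (uu v l w) j (ww v w j) = v ∧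
    ww (uu v l w) (ww v w j) l = w := by
  rcases mem_insF_decomp hv hw with ⟨d, rfl, hmem⟩ | ⟨hn, hws⟩
  · -- Case III
    rw [uuIII, wwIII]
    refine ⟨hmem, ?_, ?_, ?_, ?_, ?_⟩
    · -- v ∈ insF s (v ++ d) j
      have heq : ins (v ++ d) j v = v := by
        apply ins_unmoved _ j
        rintro ⟨hpre, hne⟩
        have hd : d = [] := by
          have := hpre.length_le
          simp only [List.length_append] at this
          exact List.length_eq_zero_iff.mp (by omega)
        subst hd
        exact hne (by simp)
      have h2 := ins_mem_insF (v := v ++ d) (l := j) hv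
      rwa [heq] at h2
    · have h1 : ins (v ++ l :: d) j (v ++ [l]) = v ++ [l] := newA_III v d l j
      rw [h1]
    · exact comm_III v d l j
    · exact uuII v d j
    · exact wwII v d l
  · by_cases hwv : w <+: v
    · -- Case II
      obtain ⟨d, rfl⟩ := hwv
      rw [uuII, wwII]
      refine ⟨hws, ?_, newA_II w d l j, comm_II w d l j, uuIII w d j, wwIII w d j l⟩
      · cases d with
        | nil => exact new_mem_insF
        | cons a d' =>
            have heq : ins w j (w ++ a :: d') = w ++ j :: a :: d' := ins_of_append (by simp) w j
            have h2 := ins_mem_insF (v := w) (l := j) hv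
            rwa [heq] at h2
    · -- Case I
      have hnvw : ¬ v <+: w := by
        intro hc
        refine hwv ?_
        have : w = v := by
          by_contra hc2
          exact hn ⟨hc, hc2⟩
        rw [this]
      rw [uuI hnvw, wwI hwv]
      refine ⟨hws, ?_, newA_I hnvw hwv l j, comm_I hnvw hwv l j, uuI (by simpa using hwv) j, wwI hnvw l⟩
      · have heq : ins w j v = v := ins_unmoved (fun hc => hwv hc.1) j
        have h2 := ins_mem_insF (v := w) (l := j) hv
        rwa [heq] at h2

end BF
namespace BF
open Bonsai

variable {m : ℕ} {s : Finset (List (Fin m))} {v w : List (Fin m)} {l j : Fin m}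

lemma insF_comm (hv : v ∈ s) (hw : w ∈ insF s v l) (j : Fin m) :
    insF (insF s v l) w j = insF (insF s (uu v l w) j) (ww v w j) l := by
  obtain ⟨hu, hwm, hnew, hcomm, hP4a, hP4b⟩ := swap_spec hv hw j
  obtain ⟨-, -, hnew', -, -, -⟩ := swap_spec hu hwm l
  rw [hP4b] at hnew'
  have himg : s.image (ins w j ∘ ins v l) = s.image (ins (ww v w j) l ∘ ins (uu v l w) j) :=
    Finset.image_congr (fun p _ => hcomm p)
  simp only [insF, Finset.image_insert, Finset.image_image]
  rw [hnew, hnew', himg]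
  exact Finset.insert_comm _ _ _

lemma wwl_ne (hv : v ∈ s) (hw : w ∈ insF s v l) (j : Fin m) :
    ww v w j ++ [l] ≠ w ++ [j] := by
  obtain ⟨-, -, hnew, -, -, -⟩ := swap_spec hv hw j
  intro hc
  exact ins_ne_new w j (v ++ [l]) (by rw [hnew, hc])

lemma parity_lemma (hv : v ∈ s) (hw : w ∈ insF s v l) (j : Fin m) :
    Odd ((cnt (insF s v l) (v ++ [l]) + cnt (insF (insF s v l) w j) (w ++ [j])) +
      (cnt (insF s (uu v l w) j) (uu v l w ++ [j]) +
        cnt (insF (insF s (uu v l w) j) (ww v w j) l) (ww v w j ++ [l]))) := by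
  obtain ⟨hu, hwm, hnew, hcomm, hP4a, hP4b⟩ := swap_spec hv hw j
  obtain ⟨-, -, hnew', -, -, -⟩ := swap_spec hu hwm l
  rw [hP4b] at hnew'
  have hset := insF_comm hv hw j
  have hne := wwl_ne hv hw j
  have e4 : cnt (insF (insF s (uu v l w) j) (ww v w j) l) (ww v w j ++ [l])
      = cnt (insF s v l) (v ++ [l]) + (if w ++ [j] < ww v w j ++ [l] then 1 else 0) := by
    rw [← hset, ← hnew, cnt_insF, hnew]
  have e2 : cnt (insF (insF s v l) w j) (w ++ [j])
      = cnt (insF s (uu v l w) j) (uu v l w ++ [j])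
        + (if ww v w j ++ [l] < w ++ [j] then 1 else 0) := by
    rw [hset, ← hnew', cnt_insF, hnew']
  rw [e2, e4]
  rcases lt_trichotomy (ww v w j ++ [l]) (w ++ [j]) with h | h | h
  · rw [if_pos h, if_neg (lt_asymm h)]
    exact ⟨cnt (insF s v l) (v ++ [l]) + cnt (insF s (uu v l w) j) (uu v l w ++ [j]),
      by ring⟩
  · exact absurd h hne
  · rw [if_neg (lt_asymm h), if_pos h]
    exact ⟨cnt (insF s v l) (v ++ [l]) + cnt (insF s (uu v l w) j) (uu v l w ++ [j]),
      by ring⟩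

end BF

section Assembly
open Bonsai BF

variable {m : ℕ}

lemma bfMap_single (k : Type) [Field k] (m : ℕ) (X : Bonsai m) (c : k) :
    bfMap k m (Finsupp.single X c) = c • bfVal k m X := by
  simp only [bfMap]
  rw [Finsupp.lsum_single, LinearMap.toSpanSingleton_apply]

lemma bfVal_eq (k : Type) [Field k] (T : Bonsai m) :
    bfVal k m T = ∑ vl ∈ T.verts ×ˢ (Finset.univ : Finset (Fin m)),
      ((-1 : k) ^ cnt (insF T.verts vl.1 vl.2) (vl.1 ++ [vl.2])) •
        Finsupp.single (mkBonsai (insF T.verts vl.1 vl.2)) (1 : k) := by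
  rw [bfVal, extPairs_eq T, Finset.sum_image]
  · rfl
  · intro x _ y _ heq
    rw [Prod.mk.injEq] at heq
    obtain ⟨h1, h2⟩ := heq
    obtain ⟨ha, hb⟩ := concat_inj h2
    exact Prod.ext ha hb

lemma bfMap_bfVal (k : Type) [Field k] (T : Bonsai m) :
    bfMap k m (bfVal k m T) = 0 := by
  rw [bfVal_eq, map_sum]
  have hstep : ∀ vl ∈ T.verts ×ˢ (Finset.univ : Finset (Fin m)),
      bfMap k m (((-1 : k) ^ cnt (insF T.verts vl.1 vl.2) (vl.1 ++ [vl.2])) •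
        Finsupp.single (mkBonsai (insF T.verts vl.1 vl.2)) (1 : k))
      = ∑ wj ∈ (insF T.verts vl.1 vl.2) ×ˢ (Finset.univ : Finset (Fin m)),
          ((-1 : k) ^ (cnt (insF T.verts vl.1 vl.2) (vl.1 ++ [vl.2]) +
            cnt (insF (insF T.verts vl.1 vl.2) wj.1 wj.2) (wj.1 ++ [wj.2]))) •
          Finsupp.single (mkBonsai (insF (insF T.verts vl.1 vl.2) wj.1 wj.2)) (1 : k) := by
    rintro ⟨v, l⟩ hvl
    have hv : v ∈ T.verts := (Finset.mem_product.mp hvl).1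
    rw [map_smul, bfMap_single, one_smul, bfVal_eq k (mkBonsai (insF T.verts v l)),
      mkBonsai_insF_verts T hv l, Finset.smul_sum]
    apply Finset.sum_congr rfl
    rintro ⟨w, jj⟩ _
    rw [smul_smul, ← pow_add]
  rw [Finset.sum_congr rfl hstep, Finset.sum_sigma']
  refine Finset.sum_involution
    (fun x _ => ⟨(uu x.1.1 x.1.2 x.2.1, x.2.2), (ww x.1.1 x.2.1 x.2.2, x.1.2)⟩)
    ?_ ?_ ?_ ?_
  · rintro ⟨⟨v, l⟩, ⟨w, jj⟩⟩ hx
    obtain ⟨hvl, hwj⟩ := Finset.mem_sigma.mp hx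
    have hv : v ∈ T.verts := (Finset.mem_product.mp hvl).1
    have hw : w ∈ insF T.verts v l := (Finset.mem_product.mp hwj).1
    simp only
    have hU : mkBonsai (insF (insF T.verts (uu v l w) jj) (ww v w jj) l)
        = mkBonsai (insF (insF T.verts v l) w jj) := by
      rw [insF_comm hv hw jj]
    rw [hU]
    set a : k := (-1 : k) ^ (cnt (insF T.verts v l) (v ++ [l]) +
      cnt (insF (insF T.verts v l) w jj) (w ++ [jj])) with ha_def
    set b : k := (-1 : k) ^ (cnt (insF T.verts (uu v l w) jj) (uu v l w ++ [jj]) +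
      cnt (insF (insF T.verts (uu v l w) jj) (ww v w jj) l) (ww v w jj ++ [l])) with hb_def
    have hmul : a * b = -1 := by
      rw [ha_def, hb_def, ← pow_add]
      exact Odd.neg_one_pow (parity_lemma hv hw jj)
    have ha2 : a * a = 1 := by
      rw [ha_def, ← pow_add]
      exact Even.neg_one_pow ⟨_, rfl⟩
    have ha0 : a ≠ 0 := by
      intro h
      rw [h, zero_mul] at ha2
      exact zero_ne_one ha2
    have hz : a * (a + b) = 0 := by
      rw [mul_add, ha2, hmul]
      ring
    have hab : a + b = 0 := by
      rcases mul_eq_zero.mp hz with h | h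
      · exact absurd h ha0
      · exact h
    rw [← add_smul, hab, zero_smul]
  · rintro ⟨⟨v, l⟩, ⟨w, jj⟩⟩ hx -
    obtain ⟨hvl, hwj⟩ := Finset.mem_sigma.mp hx
    have hv : v ∈ T.verts := (Finset.mem_product.mp hvl).1
    have hw : w ∈ insF T.verts v l := (Finset.mem_product.mp hwj).1
    intro heq
    rw [Sigma.mk.inj_iff] at heq
    obtain ⟨h1, h2⟩ := heq
    have h2' := eq_of_heq h2
    rw [Prod.mk.injEq] at h1 h2'
    exact wwl_ne hv hw jj (by rw [h2'.1, ← h1.2])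
  · rintro ⟨⟨v, l⟩, ⟨w, jj⟩⟩ hx
    obtain ⟨hvl, hwj⟩ := Finset.mem_sigma.mp hx
    have hv : v ∈ T.verts := (Finset.mem_product.mp hvl).1
    have hw : w ∈ insF T.verts v l := (Finset.mem_product.mp hwj).1
    obtain ⟨hu, hwm, -, -, -, -⟩ := swap_spec hv hw jj
    rw [Finset.mem_sigma]
    exact ⟨Finset.mem_product.mpr ⟨hu, Finset.mem_univ _⟩,
      Finset.mem_product.mpr ⟨hwm, Finset.mem_univ _⟩⟩
  · rintro ⟨⟨v, l⟩, ⟨w, jj⟩⟩ hx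
    obtain ⟨hvl, hwj⟩ := Finset.mem_sigma.mp hx
    have hv : v ∈ T.verts := (Finset.mem_product.mp hvl).1
    have hw : w ∈ insF T.verts v l := (Finset.mem_product.mp hwj).1
    obtain ⟨hu, hwm, -, -, hP4a, hP4b⟩ := swap_spec hv hw jj
    simp only [hP4a, hP4b]

end Assembly
/-- **STATEMENT 7.** The branch-fixed differential squares to zero:
`d^{n+1} ∘ d^n = 0`, so `(C^•, d)` is a cochain complex. -/
theorem branchFixed_d_squared (k : Type) [Field k] (m : ℕ) :
    (bfMap k m).comp (bfMap k m) = 0 := by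
  apply Finsupp.lhom_ext
  intro T b
  rw [LinearMap.comp_apply, LinearMap.zero_apply, bfMap_single, map_smul,
    bfMap_bfVal, smul_zero]
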